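/- For all real Euler angles α₁,β₁,γ₁,α₂,β₂,γ₂, the measurement-assisted transition probability satisfies P_{1→2}^{(1)}(U(α₁,β₁,γ₁), U(α₂,β₂,γ₂)) = L₁(α₁+γ₂, β₁, β₂); in particular it depends only on the three kinematic parameters Ω = α₁+γ₂, β₁ and β₂. -/

import Mathlib

open Matrix

/-- Measurement-assisted transition probability `P_{1→k}^{(j)}`:
indices are 0-based, so state `|1⟩` is index `0`, state `|2⟩` is index `1`,
state `|3⟩` is index `2`.  Here `ρ = U₁|1⟩⟨1|U₁†`, `P = |j⟩⟨j|`, and the value is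
`⟨k| U₂ (P ρ P + (I−P) ρ (I−P)) U₂† |k⟩` (a real number). -/
noncomputable def measProb (j k : Fin 3) (U₁ U₂ : Matrix (Fin 3) (Fin 3) ℂ) : ℝ :=
  let ρ : Matrix (Fin 3) (Fin 3) ℂ := U₁ * Matrix.single 0 0 1 * U₁ᴴ
  let P : Matrix (Fin 3) (Fin 3) ℂ := Matrix.single j j 1
  ((U₂ * (P * ρ * P + (1 - P) * ρ * (1 - P)) * U₂ᴴ) k k).re

/-- The Wigner matrix `U(α,β,γ)` of the spin-1 `ZYZ` Euler parameterization. -/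
noncomputable def Umat (α β γ : ℝ) : Matrix (Fin 3) (Fin 3) ℂ :=
  !![Complex.exp (-Complex.I * (↑α + ↑γ)) * (Real.cos (β/2) : ℂ)^2,
       -(Complex.exp (-Complex.I * ↑α) / (Real.sqrt 2 : ℂ)) * (Real.sin β : ℂ),
       Complex.exp (-Complex.I * (↑α - ↑γ)) * (Real.sin (β/2) : ℂ)^2;
     (Complex.exp (-Complex.I * ↑γ) / (Real.sqrt 2 : ℂ)) * (Real.sin β : ℂ),
       (Real.cos β : ℂ),
       -(Complex.exp (Complex.I * ↑γ) / (Real.sqrt 2 : ℂ)) * (Real.sin β : ℂ);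
     Complex.exp (Complex.I * (↑α - ↑γ)) * (Real.sin (β/2) : ℂ)^2,
       (Complex.exp (Complex.I * ↑α) / (Real.sqrt 2 : ℂ)) * (Real.sin β : ℂ),
       Complex.exp (Complex.I * (↑α + ↑γ)) * (Real.cos (β/2) : ℂ)^2]

/-- The kinematic landscape function `L₁(Ω,β₁,β₂)`. -/
noncomputable def L1 (Ω β₁ β₂ : ℝ) : ℝ :=
  (1/8) * Real.sin β₂ ^ 2 * (3 + Real.cos (2*β₁))
  + (1/2) * Real.sin β₁ ^ 2 * Real.cos β₂ ^ 2
  - (1/2) * Real.cos Ω * Real.sin β₁ * Real.sin (β₁/2) ^ 2 * Real.sin (2*β₂)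

/-!
Measuring the projector `P = |j⟩⟨j|` turns the pure state `ρ = v v†`, `v = U₁|1⟩`, into the
mixture of the two pure states `P v` and `(1 - P) v`, so the transition probability is
`|(U₂ P v)_k|² + |(U₂ (1 - P) v)_k|²`. For `j = |1⟩`, `k = |2⟩` and Wigner matrices, all phases
drop out of the first term; in the second one `e^{-iγ₁}` factors out as a global phase, and the
interference term that remains carries only the relative phase `α₁ + γ₂`.
-/

namespace Matrix

variable {m n R : Type*}

theorem mul_vecMulVec_star_mul_conjTranspose [Fintype n] [NonUnitalSemiring R] [StarRing R]
    (A : Matrix m n R) (x : n → R) :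
    A * vecMulVec x (star x) * Aᴴ = vecMulVec (A *ᵥ x) (star (A *ᵥ x)) := by
  rw [mul_vecMulVec, vecMulVec_mul, vecMul_conjTranspose, star_star]

theorem IsHermitian.mul_vecMulVec_star_mul [Fintype n] [NonUnitalSemiring R] [StarRing R]
    {P : Matrix n n R} (hP : P.IsHermitian) (x : n → R) :
    P * vecMulVec x (star x) * P = vecMulVec (P *ᵥ x) (star (P *ᵥ x)) := by
  nth_rewrite 2 [← hP.eq]
  exact mul_vecMulVec_star_mul_conjTranspose P x

theorem isHermitian_single_self_one [DecidableEq n] [Semiring R] [StarRing R] (i : n) :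
    (single i i (1 : R)).IsHermitian := by
  rw [IsHermitian, conjTranspose_single, star_one]

theorem mul_single_self_one_mul_conjTranspose [Fintype n] [DecidableEq n] [Semiring R]
    [StarRing R] (A : Matrix m n R) (i : n) :
    A * single i i (1 : R) * Aᴴ = vecMulVec (A.col i) (star (A.col i)) := by
  have hstar : star (Pi.single i 1 : n → R) = Pi.single i 1 := by
    rw [Pi.star_single, star_one]
  rw [single_eq_single_vecMulVec_single]
  nth_rewrite 2 [← hstar]
  rw [mul_vecMulVec_star_mul_conjTranspose, mulVec_single_one]

theorem re_vecMulVec_star_apply_self (w : n → ℂ) (k : n) :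
    (vecMulVec w (star w) k k).re = Complex.normSq (w k) := by
  rw [vecMulVec_apply, Pi.star_apply, Complex.star_def, Complex.mul_conj, Complex.ofReal_re]

end Matrix

open Complex

theorem Complex.normSq_ofReal_sub_ofReal_mul_exp (a b θ : ℝ) :
    normSq (a - b * exp (θ * I)) = a ^ 2 + b ^ 2 - 2 * a * b * Real.cos θ := by
  rw [normSq_apply]
  simp only [sub_re, sub_im, re_ofReal_mul, im_ofReal_mul, ofReal_re, ofReal_im,
    exp_ofReal_mul_I_re, exp_ofReal_mul_I_im]
  linear_combination b ^ 2 * Real.sin_sq_add_cos_sq θ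

theorem Complex.normSq_exp_neg_I_mul (x : ℝ) : normSq (exp (-I * x)) = 1 := by
  rw [normSq_eq_norm_sq, norm_exp]
  simp

theorem Real.cos_half_pow_four_add_sin_half_pow_four (x : ℝ) :
    Real.cos (x / 2) ^ 4 + Real.sin (x / 2) ^ 4 = (3 + Real.cos (2 * x)) / 4 := by
  have hsin : Real.sin x = 2 * Real.sin (x / 2) * Real.cos (x / 2) := by
    rw [← Real.sin_two_mul, mul_div_cancel₀ x two_ne_zero]
  rw [Real.cos_two_mul, Real.cos_sq', hsin]
  linear_combination
    (Real.sin (x / 2) ^ 2 + Real.cos (x / 2) ^ 2 + 1) * Real.sin_sq_add_cos_sq (x / 2)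

open Matrix

theorem measProb_eq_normSq_add_normSq (j k : Fin 3) (U₁ U₂ : Matrix (Fin 3) (Fin 3) ℂ) :
    measProb j k U₁ U₂ =
      normSq ((U₂ *ᵥ single j j 1 *ᵥ U₁.col 0) k) +
        normSq ((U₂ *ᵥ (1 - single j j 1) *ᵥ U₁.col 0) k) := by
  have hP := isHermitian_single_self_one (R := ℂ) j
  rw [measProb, mul_single_self_one_mul_conjTranspose, hP.mul_vecMulVec_star_mul,
    (isHermitian_one.sub hP).mul_vecMulVec_star_mul, Matrix.mul_add, Matrix.add_mul,
    mul_vecMulVec_star_mul_conjTranspose, mul_vecMulVec_star_mul_conjTranspose, Matrix.add_apply,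
    add_re, re_vecMulVec_star_apply_self, re_vecMulVec_star_apply_self]

theorem measProb_zero_eq (k : Fin 3) (U₁ U₂ : Matrix (Fin 3) (Fin 3) ℂ) :
    measProb 0 k U₁ U₂ =
      normSq (U₂ k 0 * U₁ 0 0) + normSq (U₂ k 1 * U₁ 1 0 + U₂ k 2 * U₁ 2 0) := by
  rw [measProb_eq_normSq_add_normSq]
  simp [mulVec, dotProduct, Fin.sum_univ_three, single_apply, one_apply]

theorem normSq_Umat_one_zero_mul_Umat_zero_zero (α₁ β₁ γ₁ α₂ β₂ γ₂ : ℝ) :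
    normSq (Umat α₂ β₂ γ₂ 1 0 * Umat α₁ β₁ γ₁ 0 0) =
      Real.sin β₂ ^ 2 / 2 * Real.cos (β₁ / 2) ^ 4 := by
  simp only [Umat, of_apply, cons_val_zero, cons_val_one]
  rw [← ofReal_add, normSq_mul, normSq_mul, normSq_div, normSq_mul, normSq_exp_neg_I_mul,
    normSq_exp_neg_I_mul, normSq_ofReal, normSq_ofReal, Real.mul_self_sqrt zero_le_two,
    ← ofReal_pow, normSq_ofReal]
  ring

theorem Umat_one_one_mul_add_Umat_one_two_mul (α₁ β₁ γ₁ α₂ β₂ γ₂ : ℝ) :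
    Umat α₂ β₂ γ₂ 1 1 * Umat α₁ β₁ γ₁ 1 0 + Umat α₂ β₂ γ₂ 1 2 * Umat α₁ β₁ γ₁ 2 0 =
      exp (-I * γ₁) / (Real.sqrt 2 : ℂ) *
        ((Real.cos β₂ * Real.sin β₁ : ℝ) -
          (Real.sin β₂ * Real.sin (β₁ / 2) ^ 2 : ℝ) * exp ((α₁ + γ₂ : ℝ) * I)) := by
  have hphase : exp (I * γ₂) * exp (I * (α₁ - γ₁)) =
      exp (-I * γ₁) * exp ((α₁ + γ₂ : ℝ) * I) := by
    rw [← exp_add, ← exp_add]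
    push_cast
    ring_nf
  simp only [Umat, of_apply, cons_val_zero, cons_val_one, cons_val_two, head_cons, tail_cons,
    ofReal_mul, ofReal_pow]
  linear_combination (-(Real.sin β₂ : ℂ) * (Real.sin (β₁ / 2) : ℂ) ^ 2 / Real.sqrt 2) * hphase

theorem normSq_Umat_one_one_mul_add_Umat_one_two_mul (α₁ β₁ γ₁ α₂ β₂ γ₂ : ℝ) :
    normSq (Umat α₂ β₂ γ₂ 1 1 * Umat α₁ β₁ γ₁ 1 0 + Umat α₂ β₂ γ₂ 1 2 * Umat α₁ β₁ γ₁ 2 0) =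
      ((Real.cos β₂ * Real.sin β₁) ^ 2 + (Real.sin β₂ * Real.sin (β₁ / 2) ^ 2) ^ 2 -
        2 * (Real.cos β₂ * Real.sin β₁) * (Real.sin β₂ * Real.sin (β₁ / 2) ^ 2) *
          Real.cos (α₁ + γ₂)) / 2 := by
  rw [Umat_one_one_mul_add_Umat_one_two_mul, normSq_mul, normSq_div, normSq_exp_neg_I_mul,
    normSq_ofReal, Real.mul_self_sqrt zero_le_two, normSq_ofReal_sub_ofReal_mul_exp]
  ring

/-- `P_{1→2}^{(1)}(U(α₁,β₁,γ₁), U(α₂,β₂,γ₂)) = L₁(α₁+γ₂, β₁, β₂)`,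
so the transition probability depends only on `Ω = α₁+γ₂`, `β₁` and `β₂`.
(0-based indices: `j = 0` is state `|1⟩`, `k = 1` is state `|2⟩`.) -/
theorem stmt4 (α₁ β₁ γ₁ α₂ β₂ γ₂ : ℝ) :
    measProb 0 1 (Umat α₁ β₁ γ₁) (Umat α₂ β₂ γ₂) = L1 (α₁ + γ₂) β₁ β₂ := by
  rw [measProb_zero_eq, normSq_Umat_one_zero_mul_Umat_zero_zero,
    normSq_Umat_one_one_mul_add_Umat_one_two_mul, L1, Real.sin_two_mul]
  linear_combination Real.sin β₂ ^ 2 / 2 * Real.cos_half_pow_four_add_sin_half_pow_four β₁
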